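/- arXiv:1301.0290 — 3 statements merged into one kernel-verified Lean document; each statement's English description precedes it below -/
import Mathlib

section
/- Let n > 2 and suppose θ(t), k(t) are smooth real functions with θ positive and nonconstant, satisfying the equations (n−2)θ⁻¹θ′ + k′ = 1 and (n−2)θ⁻¹θ″ + k″ + 2θ⁻¹θ′k′ = 0 on an interval. Then k′ ≡ −1 and θ(t) = C·exp(2t/(n−2)) for some constant C > 0; i.e., k(t) = −t up to an additive constant and θ(t) = exp(2t/(n−2)) up to a multiplicative constant. -/
open Set

private lemma const_on_Ioo {a b : ℝ} (f : ℝ → ℝ) (hf : Differentiable ℝ f)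
    (h0 : ∀ t ∈ Ioo a b, deriv f t = 0) :
    ∀ x ∈ Ioo a b, ∀ y ∈ Ioo a b, f x = f y := by
  intro x hx y hy
  refine (convex_Ioo a b).is_const_of_fderivWithin_eq_zero hf.differentiableOn ?_ hx hy
  intro z hz
  rw [fderivWithin_of_isOpen isOpen_Ioo hz, ← toSpanSingleton_deriv, h0 z hz]
  refine ContinuousLinearMap.ext fun u => ?_
  simp

/-- Uniqueness of the almost-soliton duality: if smooth `θ > 0` (nonconstant) and `k`
satisfy `(n−2)θ⁻¹θ′ + k′ = 1` and `(n−2)θ⁻¹θ″ + k″ + 2θ⁻¹θ′k′ = 0` on an interval,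
then `k′ ≡ −1` (so `k(t) = −t` up to an additive constant) and
`θ(t) = C·exp(2t/(n−2))` for some `C > 0`. -/
theorem duality_uniqueness {n : ℕ} (hn : 2 < n) (a b : ℝ) (hab : a < b)
    (θ k : ℝ → ℝ) (hθ : ContDiff ℝ (⊤ : ℕ∞) θ) (hk : ContDiff ℝ (⊤ : ℕ∞) k)
    (hθpos : ∀ t ∈ Ioo a b, 0 < θ t)
    (hθnc : ¬ ∃ C : ℝ, ∀ t ∈ Ioo a b, θ t = C)
    (heq1 : ∀ t ∈ Ioo a b, ((n : ℝ) - 2) * (θ t)⁻¹ * deriv θ t + deriv k t = 1)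
    (heq2 : ∀ t ∈ Ioo a b, ((n : ℝ) - 2) * (θ t)⁻¹ * deriv (deriv θ) t
        + deriv (deriv k) t + 2 * (θ t)⁻¹ * deriv θ t * deriv k t = 0) :
    (∀ t ∈ Ioo a b, deriv k t = -1)
      ∧ (∃ c₀ : ℝ, ∀ t ∈ Ioo a b, k t = -t + c₀)
      ∧ (∃ C : ℝ, 0 < C ∧ ∀ t ∈ Ioo a b, θ t = C * Real.exp (2 * t / ((n : ℝ) - 2))) := by
  have hn2 : (0:ℝ) < (n:ℝ) - 2 := by
    have : (2:ℝ) < (n:ℝ) := by exact_mod_cast hn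
    linarith
  have hθd : Differentiable ℝ θ := hθ.differentiable (by simp)
  have hθ' : ContDiff ℝ (⊤:ℕ∞) (deriv θ) := (contDiff_infty_iff_deriv.mp (hθ.of_le (by simp))).2
  have hθd2 : Differentiable ℝ (deriv θ) := hθ'.differentiable (by simp)
  have hkd : Differentiable ℝ k := hk.differentiable (by simp)
  have hk' : ContDiff ℝ (⊤:ℕ∞) (deriv k) := (contDiff_infty_iff_deriv.mp (hk.of_le (by simp))).2
  have hkd2 : Differentiable ℝ (deriv k) := hk'.differentiable (by simp)
  -- key pointwise identity: θ' (1 + k') = 0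
  have key : ∀ t ∈ Ioo a b, deriv θ t * (1 + deriv k t) = 0 := by
    intro t ht
    have hp : (0:ℝ) < θ t := hθpos t ht
    have hne : θ t ≠ 0 := hp.ne'
    have h1 : HasDerivAt θ (deriv θ t) t := (hθd t).hasDerivAt
    have h2 : HasDerivAt (deriv θ) (deriv (deriv θ) t) t := (hθd2 t).hasDerivAt
    have h3 : HasDerivAt (deriv k) (deriv (deriv k) t) t := (hkd2 t).hasDerivAt
    have hinv : HasDerivAt (fun s => (θ s)⁻¹) (-(deriv θ t) / (θ t)^2) t := h1.inv hne
    have hF : HasDerivAt (fun s => ((n:ℝ)-2) * ((θ s)⁻¹ * deriv θ s) + deriv k s)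
        (((n:ℝ)-2) * ((-(deriv θ t) / (θ t)^2) * deriv θ t + (θ t)⁻¹ * deriv (deriv θ) t)
          + deriv (deriv k) t) t :=
      (((hinv.mul h2).const_mul ((n:ℝ)-2)).add h3)
    have hFeq : deriv (fun s => ((n:ℝ)-2) * ((θ s)⁻¹ * deriv θ s) + deriv k s) t = 0 := by
      have hev : (fun s => ((n:ℝ)-2) * ((θ s)⁻¹ * deriv θ s) + deriv k s)
          =ᶠ[nhds t] fun _ => (1:ℝ) := by
        filter_upwards [isOpen_Ioo.mem_nhds ht] with s hs
        rw [← mul_assoc]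
        exact heq1 s hs
      rw [hev.deriv_eq]
      simp
    have hzero : ((n:ℝ)-2) * ((-(deriv θ t) / (θ t)^2) * deriv θ t + (θ t)⁻¹ * deriv (deriv θ) t)
        + deriv (deriv k) t = 0 := by
      rw [← hF.deriv, hFeq]
    have e1 := heq1 t ht
    have e2 := heq2 t ht
    have hp2 : (θ t)^2 ≠ 0 := pow_ne_zero 2 hne
    field_simp at hzero e1 e2
    have hq : (θ t)^2 * (deriv θ t * (1 + deriv k t)) = 0 := by
      linear_combination ((θ t)^2) * e2 - θ t * hzero - (θ t * deriv θ t) * e1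
    rcases mul_eq_zero.mp hq with h | h
    · exact absurd h hp2
    · exact h
  -- dichotomy via connectedness
  set U : Set ℝ := Ioo a b ∩ {t | deriv θ t ≠ 0} with hU
  set V : Set ℝ := Ioo a b ∩ {t | deriv k t ≠ -1} with hV
  have hUo : IsOpen U := isOpen_Ioo.inter (isOpen_ne.preimage (hθ'.continuous))
  have hVo : IsOpen V := isOpen_Ioo.inter (isOpen_ne.preimage (hk'.continuous))
  have hdisj : Disjoint U V := by
    rw [Set.disjoint_left]
    rintro t ⟨ht, h1⟩ ⟨_, h2⟩
    rcases mul_eq_zero.mp (key t ht) with h | h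
    · exact h1 h
    · exact h2 (by linarith)
  have hcover : Ioo a b ⊆ U ∪ V := by
    intro t ht
    rcases mul_eq_zero.mp (key t ht) with h | h
    · -- θ' = 0 ⇒ k' = 1 ≠ -1
      right
      refine ⟨ht, ?_⟩
      have e1 := heq1 t ht
      rw [h] at e1
      simp only [mul_zero, zero_add] at e1
      simp only [Set.mem_setOf_eq, e1]
      norm_num
    · -- k' = -1 ⇒ θ' ≠ 0
      left
      refine ⟨ht, ?_⟩
      have e1 := heq1 t ht
      have hk1 : deriv k t = -1 := by linarith
      rw [hk1] at e1
      simp only [Set.mem_setOf_eq]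
      intro h0
      rw [h0] at e1
      norm_num at e1
  rcases isPreconnected_Ioo.subset_or_subset hUo hVo hdisj hcover with hsub | hsub
  · -- Ioo ⊆ U : deriv θ never 0, so deriv k ≡ -1
    have hk1 : ∀ t ∈ Ioo a b, deriv k t = -1 := by
      intro t ht
      rcases mul_eq_zero.mp (key t ht) with h | h
      · exact absurd h (hsub ht).2
      · linarith
    refine ⟨hk1, ?_, ?_⟩
    · -- k t = -t + c₀
      set t₀ : ℝ := (a + b)/2 with ht₀
      have ht₀m : t₀ ∈ Ioo a b := ⟨by linarith [hab], by linarith [hab]⟩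
      have hg : Differentiable ℝ (fun t => k t + t) := hkd.add differentiable_id
      have hg0 : ∀ t ∈ Ioo a b, deriv (fun t => k t + t) t = 0 := by
        intro t ht
        rw [show deriv (fun t => k t + t) t = deriv k t + 1 from ((hkd t).hasDerivAt.add (hasDerivAt_id' (x := t))).deriv]
        simp [hk1 t ht]
      have hconst := const_on_Ioo _ hg hg0
      refine ⟨k t₀ + t₀, fun t ht => ?_⟩
      have := hconst t ht t₀ ht₀m
      linarith
    · -- θ t = C exp(2t/(n-2))
      set c : ℝ := 2 / ((n:ℝ) - 2) with hc
      have hθ'eq : ∀ t ∈ Ioo a b, deriv θ t = c * θ t := by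
        intro t ht
        have e1 := heq1 t ht
        rw [hk1 t ht] at e1
        have hne : θ t ≠ 0 := (hθpos t ht).ne'
        have e1' : ((n:ℝ)-2) * (θ t)⁻¹ * deriv θ t = 2 := by linarith
        rw [hc]
        field_simp at e1' ⊢
        linarith
      set h : ℝ → ℝ := fun t => θ t * Real.exp (-(c * t)) with hh
      have hhd : Differentiable ℝ h := by
        apply hθd.mul
        exact (Real.differentiable_exp.comp ((differentiable_id.const_mul c).neg))
      have hhd' : ∀ t, HasDerivAt h (deriv θ t * Real.exp (-(c*t)) + θ t * (Real.exp (-(c*t)) * -c)) t := by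
        intro t
        have he : HasDerivAt (fun t => Real.exp (-(c * t))) (Real.exp (-(c*t)) * -c) t := by
          have : HasDerivAt (fun t : ℝ => -(c * t)) (-c) t := by
            have h := ((hasDerivAt_id' (x := t)).const_mul c).neg; rw [mul_one] at h; exact h
          simpa using this.exp
        exact ((hθd t).hasDerivAt).mul he
      have hh0 : ∀ t ∈ Ioo a b, deriv h t = 0 := by
        intro t ht
        rw [(hhd' t).deriv, hθ'eq t ht]
        ring
      have hconst := const_on_Ioo _ hhd hh0
      set t₀ : ℝ := (a + b)/2 with ht₀
      have ht₀m : t₀ ∈ Ioo a b := ⟨by linarith [hab], by linarith [hab]⟩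
      refine ⟨θ t₀ * Real.exp (-(c * t₀)), mul_pos (hθpos t₀ ht₀m) (Real.exp_pos _), fun t ht => ?_⟩
      have hct : 2 * t / ((n:ℝ) - 2) = c * t := by
        rw [hc]; field_simp
      have hcv := hconst t ht t₀ ht₀m
      simp only [hh] at hcv
      rw [hct]
      have hexp : Real.exp (-(c*t)) * Real.exp (c * t) = 1 := by
        rw [← Real.exp_add]; simp
      calc θ t = θ t * (Real.exp (-(c*t)) * Real.exp (c*t)) := by rw [hexp]; ring
        _ = (θ t * Real.exp (-(c*t))) * Real.exp (c*t) := by ring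
        _ = (θ t₀ * Real.exp (-(c*t₀))) * Real.exp (c*t) := by rw [hcv]
  · -- Ioo ⊆ V : deriv θ ≡ 0, θ constant, contradiction
    exfalso
    apply hθnc
    have hθ0 : ∀ t ∈ Ioo a b, deriv θ t = 0 := by
      intro t ht
      rcases mul_eq_zero.mp (key t ht) with h | h
      · exact h
      · exact absurd (by linarith : deriv k t = -1) (hsub ht).2
    have hconst := const_on_Ioo _ hθd hθ0
    set t₀ : ℝ := (a + b)/2 with ht₀
    have ht₀m : t₀ ∈ Ioo a b := ⟨by linarith [hab], by linarith [hab]⟩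
    exact ⟨θ t₀, fun t ht => hconst t ht t₀ ht₀m⟩
end

section
/- Let m ≥ 2, constants A, B, κ, c, and let φ(t) = (1/(t−c)^m)(A·Σ_{k=0}^m (t−c)^k/k! + B·e^{t−c}) − κ/(2m). Then the function λ(t) := φ(t) + ((t−c) − (m+1))φ′(t) − (t−c)φ″(t) is constant. -/
noncomputable def skrG (m : ℕ) (A B c : ℝ) (s : ℝ) : ℝ :=
  A * ∑ k ∈ Finset.range (m + 1), (s - c) ^ k / (Nat.factorial k) + B * Real.exp (s - c)

noncomputable def skrPhi (m : ℕ) (A B κ c : ℝ) (s : ℝ) : ℝ :=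
  skrG m A B c s / (s - c) ^ m - κ / (2 * m)

noncomputable def skrPhi1 (m : ℕ) (A B c : ℝ) (s : ℝ) : ℝ :=
  skrG m A B c s / (s - c) ^ m - A / Nat.factorial m
    - m * skrG m A B c s / (s - c) ^ (m + 1)

noncomputable def skrPhi2 (m : ℕ) (A B c : ℝ) (s : ℝ) : ℝ :=
  skrG m A B c s / (s - c) ^ m - A / Nat.factorial m
    - 2 * m * skrG m A B c s / (s - c) ^ (m + 1)
    + m * A / (Nat.factorial m * (s - c))
    + m * (m + 1) * skrG m A B c s / (s - c) ^ (m + 2)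

lemma skr_sum_shift (m : ℕ) (x : ℝ) :
    ∑ k ∈ Finset.range (m + 1), (k : ℝ) * x ^ (k - 1) * 1 / (Nat.factorial k)
      = (∑ k ∈ Finset.range (m + 1), x ^ k / (Nat.factorial k)) - x ^ m / Nat.factorial m := by
  rw [Finset.sum_range_succ' (fun k => (k : ℝ) * x ^ (k - 1) * 1 / (Nat.factorial k)) m,
    Finset.sum_range_succ (fun k => x ^ k / (Nat.factorial k)) m]
  simp only [Nat.cast_zero, Nat.factorial_zero, Nat.cast_one, zero_mul, mul_one,
    zero_div, add_zero, add_sub_cancel_right]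
  refine Finset.sum_congr rfl fun k _ => ?_
  have hk : ((k : ℝ) + 1) ≠ 0 := by positivity
  have hf : (Nat.factorial k : ℝ) ≠ 0 := Nat.cast_ne_zero.mpr (Nat.factorial_ne_zero k)
  rw [Nat.add_sub_cancel, Nat.factorial_succ]
  push_cast
  field_simp

lemma skr_hasDerivAt_G (m : ℕ) (A B c : ℝ) (t : ℝ) :
    HasDerivAt (skrG m A B c)
      (skrG m A B c t - A * (t - c) ^ m / Nat.factorial m) t := by
  have hsum : HasDerivAt (fun s : ℝ => ∑ k ∈ Finset.range (m + 1), (s - c) ^ k / (Nat.factorial k))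
      (∑ k ∈ Finset.range (m + 1), (k : ℝ) * (t - c) ^ (k - 1) * 1 / (Nat.factorial k)) t := by
    apply HasDerivAt.fun_sum
    intro k _
    exact (((hasDerivAt_id t).sub_const c).pow k).div_const _
  have hexp : HasDerivAt (fun s : ℝ => Real.exp (s - c)) (Real.exp (t - c)) t := by
    simpa using ((hasDerivAt_id t).sub_const c).exp
  have := (hsum.const_mul A).fun_add (hexp.const_mul B)
  rw [skr_sum_shift] at this
  show HasDerivAt (fun s => skrG m A B c s) _ t
  simpa [skrG, mul_sub, sub_add_eq_add_sub, mul_div_assoc] using this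

lemma skr_hasDerivAt_phi (m : ℕ) (hm : 1 ≤ m) (A B κ c : ℝ) {t : ℝ} (ht : t ≠ c) :
    HasDerivAt (skrPhi m A B κ c) (skrPhi1 m A B c t) t := by
  obtain ⟨p, rfl⟩ : ∃ p, m = p + 1 := ⟨m - 1, by omega⟩
  have hu : t - c ≠ 0 := sub_ne_zero.mpr ht
  have hden : HasDerivAt (fun s : ℝ => (s - c) ^ (p + 1))
      (((p : ℝ) + 1) * (t - c) ^ p * 1) t := by
    simpa using ((hasDerivAt_id t).sub_const c).fun_pow (p + 1)
  have hpow_ne : (t - c) ^ (p + 1) ≠ 0 := pow_ne_zero _ hu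
  have hf : (Nat.factorial (p + 1) : ℝ) ≠ 0 := Nat.cast_ne_zero.mpr (Nat.factorial_ne_zero _)
  have h := ((skr_hasDerivAt_G (p + 1) A B c t).fun_div hden hpow_ne).sub_const
    (κ / (2 * (p + 1 : ℕ)))
  refine h.congr_deriv ?_
  simp only [skrPhi1]
  push_cast
  field_simp
  ring

lemma skr_hasDerivAt_phi1 (m : ℕ) (hm : 1 ≤ m) (A B c : ℝ) {t : ℝ} (ht : t ≠ c) :
    HasDerivAt (skrPhi1 m A B c) (skrPhi2 m A B c t) t := by
  obtain ⟨p, rfl⟩ : ∃ p, m = p + 1 := ⟨m - 1, by omega⟩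
  have hu : t - c ≠ 0 := sub_ne_zero.mpr ht
  have hden : HasDerivAt (fun s : ℝ => (s - c) ^ (p + 1))
      (((p : ℝ) + 1) * (t - c) ^ p * 1) t := by
    simpa using ((hasDerivAt_id t).sub_const c).fun_pow (p + 1)
  have hden1 : HasDerivAt (fun s : ℝ => (s - c) ^ (p + 2))
      (((p + 2 : ℕ) : ℝ) * (t - c) ^ (p + 1) * 1) t := by
    simpa only [show p + 2 - 1 = p + 1 from rfl, id] using
      ((hasDerivAt_id t).sub_const c).fun_pow (p + 2)
  have hpow_ne : (t - c) ^ (p + 1) ≠ 0 := pow_ne_zero _ hu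
  have hpow1_ne : (t - c) ^ (p + 2) ≠ 0 := pow_ne_zero _ hu
  have hG := skr_hasDerivAt_G (p + 1) A B c t
  have h1 := hG.fun_div hden hpow_ne
  have h2 := (hG.fun_div hden1 hpow1_ne).const_mul ((p + 1 : ℕ) : ℝ)
  have h := (h1.sub_const (A / Nat.factorial (p + 1))).fun_sub h2
  have heq : (fun s => skrG (p + 1) A B c s / (s - c) ^ (p + 1) - A / Nat.factorial (p + 1)
      - ((p + 1 : ℕ) : ℝ) * (skrG (p + 1) A B c s / (s - c) ^ (p + 2)))
      = skrPhi1 (p + 1) A B c := by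
    funext s; simp [skrPhi1, mul_div_assoc]
  rw [heq] at h
  refine h.congr_deriv ?_
  have hf : (Nat.factorial (p + 1) : ℝ) ≠ 0 := Nat.cast_ne_zero.mpr (Nat.factorial_ne_zero _)
  simp only [skrPhi2]
  push_cast
  field_simp
  ring

/-- For `φ` as in the soliton case of the SKR ODE, the coefficient
`λ(t) = φ + ((t−c) − (m+1))φ′ − (t−c)φ″` is constant. -/
theorem skr_soliton_coefficient_constant (m : ℕ) (hm : 2 ≤ m) (A B κ c : ℝ) :
    ∃ C : ℝ, ∀ t : ℝ, t ≠ c →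
      ((A * ∑ k ∈ Finset.range (m + 1), (t - c) ^ k / (Nat.factorial k)
            + B * Real.exp (t - c)) / (t - c) ^ m - κ / (2 * m))
        + ((t - c) - ((m : ℝ) + 1))
          * deriv (fun s : ℝ =>
              (A * ∑ k ∈ Finset.range (m + 1), (s - c) ^ k / (Nat.factorial k)
                  + B * Real.exp (s - c)) / (s - c) ^ m - κ / (2 * m)) t
        - (t - c)
          * deriv (deriv (fun s : ℝ =>
              (A * ∑ k ∈ Finset.range (m + 1), (s - c) ^ k / (Nat.factorial k)
                  + B * Real.exp (s - c)) / (s - c) ^ m - κ / (2 * m))) t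
      = C := by
  have hm1 : 1 ≤ m := le_trans (by norm_num) hm
  refine ⟨A / Nat.factorial m - κ / (2 * m), fun t ht => ?_⟩
  have hu : t - c ≠ 0 := sub_ne_zero.mpr ht
  have hfun : (fun s : ℝ =>
      (A * ∑ k ∈ Finset.range (m + 1), (s - c) ^ k / (Nat.factorial k)
          + B * Real.exp (s - c)) / (s - c) ^ m - κ / (2 * m)) = skrPhi m A B κ c := rfl
  have hGfold : (A * ∑ k ∈ Finset.range (m + 1), (t - c) ^ k / (Nat.factorial k)
      + B * Real.exp (t - c)) = skrG m A B c t := rfl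
  rw [hfun, hGfold]
  have hd1 : ∀ s : ℝ, s ≠ c → deriv (skrPhi m A B κ c) s = skrPhi1 m A B c s :=
    fun s hs => (skr_hasDerivAt_phi m hm1 A B κ c hs).deriv
  have hev : deriv (skrPhi m A B κ c) =ᶠ[nhds t] skrPhi1 m A B c := by
    filter_upwards [eventually_ne_nhds ht] with s hs using hd1 s hs
  have hd2 : deriv (deriv (skrPhi m A B κ c)) t = skrPhi2 m A B c t := by
    rw [hev.deriv_eq]
    exact (skr_hasDerivAt_phi1 m hm1 A B c ht).deriv
  rw [hd1 t ht, hd2]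
  have hf : (Nat.factorial m : ℝ) ≠ 0 := Nat.cast_ne_zero.mpr (Nat.factorial_ne_zero m)
  have hmR : (m : ℝ) ≠ 0 := Nat.cast_ne_zero.mpr (by omega)
  simp only [skrPhi1, skrPhi2]
  field_simp
  ring
end

section
/- Let m > 1, c ∈ ℝ, A, B ∈ ℝ with B ≠ 0, and set Q(t) = 2(t−c)φ(t) where φ(t) = (1/(t−c)^m)(A Σ_{k=0}^m (t−c)^k/k! + B e^{t−c}) − κ/(2m). Assume Q(t) > 0 for all t ≥ 1 (with c < 1). Then the improper integral ∫_1^∞ e^{−t/(m−1)} Q(t)^{−1/2} dt converges. -/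
open MeasureTheory

/-- Convergence of the dual arc-length integral when `sup f = ∞`: for
`Q(t) = 2(t−c)φ(t)` with the explicit soliton `φ` and `B ≠ 0`, the integral
`∫_1^∞ e^{−t/(m−1)} Q(t)^{−1/2} dt` converges (so the dual metric is incomplete). -/
theorem dual_length_integral_converges (m : ℕ) (hm : 1 < m) (A B κ c : ℝ) (hB : B ≠ 0)
    (hc : c < 1)
    (hQpos : ∀ t : ℝ, 1 ≤ t →
      0 < 2 * (t - c) * ((A * ∑ k ∈ Finset.range (m + 1), (t - c) ^ k / (Nat.factorial k)
          + B * Real.exp (t - c)) / (t - c) ^ m - κ / (2 * m))) :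
    IntegrableOn (fun t : ℝ =>
        Real.exp (-t / ((m : ℝ) - 1))
          / Real.sqrt (2 * (t - c)
              * ((A * ∑ k ∈ Finset.range (m + 1), (t - c) ^ k / (Nat.factorial k)
                  + B * Real.exp (t - c)) / (t - c) ^ m - κ / (2 * m))))
      (Set.Ici (1 : ℝ)) := by
  classical
  set S : ℝ → ℝ := fun t => ∑ k ∈ Finset.range (m + 1), (t - c) ^ k / (Nat.factorial k) with hSdef
  set Q : ℝ → ℝ := fun t =>
    2 * (t - c) * ((A * S t + B * Real.exp (t - c)) / (t - c) ^ m - κ / (2 * m)) with hQdef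
  have hn2 : (2 : ℝ) ≤ (m : ℝ) := by exact_mod_cast hm
  have hn1 : (0 : ℝ) < (m : ℝ) - 1 := by linarith
  -- continuity of S and Q
  have hScont : Continuous S := by
    apply continuous_finset_sum
    intro k _
    fun_prop
  have hQcont : ContinuousOn Q (Set.Ici 1) := by
    apply ContinuousOn.mul (by fun_prop)
    apply ContinuousOn.sub _ continuousOn_const
    apply ContinuousOn.div (by fun_prop) (by fun_prop)
    intro t ht
    have : (0 : ℝ) < t - c := by have : (1 : ℝ) ≤ t := ht; linarith
    positivity
  -- exp(t-c)/(t-c)^m → ∞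
  have hE : Filter.Tendsto (fun t : ℝ => Real.exp (t - c) / (t - c) ^ m)
      Filter.atTop Filter.atTop := by
    have h1 := (Real.tendsto_exp_div_pow_atTop m).comp
      (Filter.tendsto_atTop_add_const_right Filter.atTop (-c) Filter.tendsto_id)
    refine h1.congr fun t => ?_
    simp [sub_eq_add_neg, Function.comp]
  -- bound on S for t ≥ c + 1
  have hS0 : ∀ t : ℝ, c ≤ t → 0 ≤ S t := by
    intro t ht
    apply Finset.sum_nonneg
    intro k _
    have : (0 : ℝ) ≤ t - c := by linarith
    positivity
  have hSub : ∀ t : ℝ, c + 1 ≤ t → S t ≤ (m + 1) * (t - c) ^ m := by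
    intro t ht
    have hx : (1 : ℝ) ≤ t - c := by linarith
    have h1 : ∑ k ∈ Finset.range (m + 1), (t - c) ^ k / (Nat.factorial k)
        ≤ (Finset.range (m + 1)).card • ((t - c) ^ m) := by
      apply Finset.sum_le_card_nsmul
      intro k hk
      have hk' : k ≤ m := Nat.lt_succ_iff.mp (Finset.mem_range.mp hk)
      have h2 : (t - c) ^ k / (Nat.factorial k) ≤ (t - c) ^ k := by
        apply div_le_self (by positivity)
        exact_mod_cast Nat.one_le_iff_ne_zero.mpr (Nat.factorial_pos k).ne'
      calc (t - c) ^ k / (Nat.factorial k) ≤ (t - c) ^ k := h2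
        _ ≤ (t - c) ^ m := pow_le_pow_right₀ hx hk'
    rw [Finset.card_range, nsmul_eq_mul] at h1
    rw [hSdef]
    push_cast at h1 ⊢
    linarith
  -- bound on the perturbation
  have hP : ∀ t : ℝ, c + 1 ≤ t → |A * S t / (t - c) ^ m| ≤ |A| * ((m : ℝ) + 1) := by
    intro t ht
    have hx : (1 : ℝ) ≤ t - c := by linarith
    have hxm : (0 : ℝ) < (t - c) ^ m := by positivity
    rw [abs_div, abs_mul, abs_of_nonneg (hS0 t (by linarith)), abs_of_pos hxm,
      div_le_iff₀ hxm]
    calc |A| * S t ≤ |A| * (((m : ℝ) + 1) * (t - c) ^ m) := by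
          apply mul_le_mul_of_nonneg_left (hSub t ht) (abs_nonneg A)
      _ = |A| * ((m : ℝ) + 1) * (t - c) ^ m := by ring
  -- decomposition of the inner factor
  have hsplit : ∀ t : ℝ, (A * S t + B * Real.exp (t - c)) / (t - c) ^ m - κ / (2 * m)
      = A * S t / (t - c) ^ m + B * (Real.exp (t - c) / (t - c) ^ m) - κ / (2 * m) := by
    intro t
    rw [add_div]
    ring
  -- B must be positive
  have hBpos : 0 < B := by
    rcases lt_or_gt_of_ne hB with hBneg | hBpos
    · exfalso
      have hBE : Filter.Tendsto (fun t : ℝ => B * (Real.exp (t - c) / (t - c) ^ m))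
          Filter.atTop Filter.atBot := (Filter.tendsto_const_mul_atBot_of_neg hBneg).2 hE
      have hev : ∀ᶠ t : ℝ in Filter.atTop,
          B * (Real.exp (t - c) / (t - c) ^ m) < -(|A| * ((m : ℝ) + 1)) - |κ / (2 * m)| :=
        hBE.eventually_lt_atBot _
      have hev2 : ∀ᶠ t : ℝ in Filter.atTop, max 1 (c + 1) ≤ t := Filter.eventually_ge_atTop _
      obtain ⟨t, h1, h2⟩ := (hev.and hev2).exists
      have ht1 : (1 : ℝ) ≤ t := le_trans (le_max_left _ _) h2
      have htc : c + 1 ≤ t := le_trans (le_max_right _ _) h2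
      have hPt := hP t htc
      have habs := abs_le.mp hPt
      have hmκ := neg_abs_le (κ / (2 * (m : ℝ)))
      have hκ' := le_abs_self (κ / (2 * (m : ℝ)))
      have hstuff : (A * S t + B * Real.exp (t - c)) / (t - c) ^ m - κ / (2 * m) < 0 := by
        rw [hsplit t]; linarith
      have hx : (0 : ℝ) < 2 * (t - c) := by linarith
      have := mul_neg_of_pos_of_neg hx hstuff
      have := hQpos t ht1
      linarith
    · exact hBpos
  -- Q is eventually ≥ 1
  have hBE : Filter.Tendsto (fun t : ℝ => B * (Real.exp (t - c) / (t - c) ^ m))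
      Filter.atTop Filter.atTop := (Filter.tendsto_const_mul_atTop_of_pos hBpos).2 hE
  have hev : ∀ᶠ t : ℝ in Filter.atTop,
      1 + |A| * ((m : ℝ) + 1) + |κ / (2 * m)| ≤ B * (Real.exp (t - c) / (t - c) ^ m) :=
    hBE.eventually_ge_atTop _
  have hev2 : ∀ᶠ t : ℝ in Filter.atTop, max 1 (c + 1) ≤ t := Filter.eventually_ge_atTop _
  obtain ⟨T, hT⟩ := Filter.eventually_atTop.mp (hev.and hev2)
  have hQbig : ∀ t : ℝ, T ≤ t → 1 ≤ Q t := by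
    intro t ht
    obtain ⟨h1, h2⟩ := hT t ht
    have ht1 : (1 : ℝ) ≤ t := le_trans (le_max_left _ _) h2
    have htc : c + 1 ≤ t := le_trans (le_max_right _ _) h2
    have habs := abs_le.mp (hP t htc)
    have hκ' := le_abs_self (κ / (2 * (m : ℝ)))
    have hstuff : 1 ≤ (A * S t + B * Real.exp (t - c)) / (t - c) ^ m - κ / (2 * m) := by
      rw [hsplit t]; linarith
    have hx : (2 : ℝ) ≤ 2 * (t - c) := by linarith
    have hQt : Q t = 2 * (t - c) * ((A * S t + B * Real.exp (t - c)) / (t - c) ^ m - κ / (2 * m)) := rfl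
    nlinarith
  -- lower bound δ on [1, ∞)
  set T' : ℝ := max T 1 with hT'def
  obtain ⟨t₀, ht₀K, ht₀min⟩ := (isCompact_Icc (a := (1:ℝ)) (b := T')).exists_isMinOn
    ⟨1, by constructor <;> simp [hT'def]⟩ (hQcont.mono (Set.Icc_subset_Ici_self))
  have hδpos : 0 < Q t₀ := hQpos t₀ ht₀K.1
  set δ : ℝ := min (Q t₀) 1 with hδdef
  have hδpos' : 0 < δ := lt_min hδpos one_pos
  have hδle : ∀ t : ℝ, 1 ≤ t → δ ≤ Q t := by
    intro t ht
    rcases le_or_gt t T' with hle | hgt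
    · exact le_trans (min_le_left _ _) (ht₀min ⟨ht, hle⟩)
    · have : T ≤ t := le_trans (le_max_left _ _) hgt.le
      exact le_trans (min_le_right _ _) (hQbig t this)
  -- measurable
  have hfcont : ContinuousOn (fun t : ℝ => Real.exp (-t / ((m : ℝ) - 1)) / Real.sqrt (Q t))
      (Set.Ici 1) := by
    apply ContinuousOn.div (by fun_prop)
      (Real.continuous_sqrt.comp_continuousOn hQcont)
    intro t ht
    exact (Real.sqrt_pos.mpr (hQpos t ht)).ne'
  -- the dominating function
  have hgint : IntegrableOn
      (fun t : ℝ => (1 / Real.sqrt δ) * Real.exp (-(1 / ((m : ℝ) - 1)) * t))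
      (Set.Ici 1) := by
    rw [integrableOn_Ici_iff_integrableOn_Ioi]
    exact (exp_neg_integrableOn_Ioi 1 (by positivity)).const_mul _
  refine hgint.mono' (hfcont.aestronglyMeasurable measurableSet_Ici) ?_
  rw [ae_restrict_iff' measurableSet_Ici]
  · apply Filter.Eventually.of_forall
    intro t ht'
    simp only [Set.mem_Ici] at ht'
    have hQt := hQpos t ht'
    have hsq : 0 < Real.sqrt (Q t) := Real.sqrt_pos.mpr hQt
    have hsqδ : 0 < Real.sqrt δ := Real.sqrt_pos.mpr hδpos'
    have hnn : 0 ≤ Real.exp (-t / ((m : ℝ) - 1)) / Real.sqrt (Q t) :=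
      div_nonneg (Real.exp_pos _).le (Real.sqrt_nonneg _)
    rw [Real.norm_eq_abs, abs_of_nonneg hnn]
    have hle : Real.sqrt δ ≤ Real.sqrt (Q t) := Real.sqrt_le_sqrt (hδle t ht')
    calc Real.exp (-t / ((m : ℝ) - 1)) / Real.sqrt (Q t)
        ≤ Real.exp (-t / ((m : ℝ) - 1)) / Real.sqrt δ := by
          gcongr
      _ = (1 / Real.sqrt δ) * Real.exp (-(1 / ((m : ℝ) - 1)) * t) := by
          rw [show -t / ((m : ℝ) - 1) = -(1 / ((m : ℝ) - 1)) * t by ring]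
          ring
end
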